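/- arXiv:1612.05133 — 2 statements merged into one kernel-verified Lean document; each statement's English description precedes it below -/
import Mathlib

section
/- Let μ be a Borel measure, D a dyadic system, and suppose for each K ∈ D an operator A_K on L²(μ) satisfies A_K = P_K^{(k+1)} A_K D_K^{(k+r)} (with P_K^{(m)} = Σ_{j=0}^{m-1} D_K^{(j)}) and the uniform bound |⟨A_K f, g⟩| ≤ C ‖f‖₂ ‖g‖₂ with support/block structure A_K f = 1_K A_K (1_K f). Then the sum Q = Σ_K A_K satisfies |⟨Q f, g⟩| ≤ C √(k+1) ‖f‖₂ ‖g‖₂ for all f, g ∈ L²(μ), where the improved estimate uses ⟨A_K f, g⟩ = ⟨A_K D_K^{(k+r)} f, P_K^{(k+1)} g⟩ and the orthogonality Σ_K ‖D_K^{(j)} g‖₂² ≤ ‖g‖₂². -/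
open Finset RealInnerProductSpace

/-- Abstract form of the estimate for the operators `Q_k = Σ_K A_K`: if each `A_K`
factors as `A_K = P_K^{(k+1)} A_K D_K^{(k+r)}` (with `P_K^{(m)} = Σ_{j<m} D_K^{(j)}`),
the martingale blocks `D_K^{(j)}` are self-adjoint, mutually orthogonal in `j`, and
satisfy `Σ_K ‖D_K^{(j)} g‖² ≤ ‖g‖²`, and `|⟨A_K f, g⟩| ≤ C‖f‖‖g‖` uniformly, then
`|⟨(Σ_K A_K) f, g⟩| ≤ C √(k+1) ‖f‖ ‖g‖`. -/
theorem sum_block_operator_bound {E : Type*} [NormedAddCommGroup E]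
    [InnerProductSpace ℝ E] {κ : Type*} [Fintype κ] (k r : ℕ) (C : ℝ) (hC : 0 ≤ C)
    (A : κ → E →L[ℝ] E) (D : κ → ℕ → E →L[ℝ] E)
    (hself : ∀ K j (f g : E), ⟪D K j f, g⟫ = ⟪f, D K j g⟫)
    (horthj : ∀ K j j', j ≠ j' → ∀ g : E, ⟪D K j g, D K j' g⟫ = 0)
    (horth : ∀ j (g : E), ∑ K, ‖D K j g‖ ^ 2 ≤ ‖g‖ ^ 2)
    (hfact : ∀ K, A K = (∑ j ∈ Finset.range (k + 1), D K j).comp ((A K).comp (D K (k + r))))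
    (hA : ∀ K (f g : E), |⟪A K f, g⟫| ≤ C * ‖f‖ * ‖g‖) :
    ∀ f g : E, |⟪(∑ K, A K) f, g⟫| ≤ C * Real.sqrt (k + 1) * ‖f‖ * ‖g‖ := by
  intro f g
  classical
  set a : κ → ℝ := fun K => ‖D K (k + r) f‖ with ha_def
  set b : κ → ℝ := fun K => ‖(∑ j ∈ Finset.range (k + 1), D K j) g‖ with hb_def
  -- key rewriting of each pairing
  have key : ∀ K : κ,
      ⟪A K f, g⟫ = ⟪A K (D K (k + r) f), (∑ j ∈ Finset.range (k + 1), D K j) g⟫ := by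
    intro K
    conv_lhs => rw [hfact K]
    simp only [ContinuousLinearMap.comp_apply, ContinuousLinearMap.sum_apply]
    rw [sum_inner, inner_sum]
    exact Finset.sum_congr rfl fun j _ => hself K j _ g
  -- squared norm of the block sum
  have hb2 : ∀ K : κ, b K ^ 2 = ∑ j ∈ Finset.range (k + 1), ‖D K j g‖ ^ 2 := by
    intro K
    have h1 : b K ^ 2
        = ⟪(∑ j ∈ Finset.range (k + 1), D K j) g, (∑ j ∈ Finset.range (k + 1), D K j) g⟫ :=
      (real_inner_self_eq_norm_sq _).symm
    rw [h1]
    simp only [ContinuousLinearMap.sum_apply]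
    rw [sum_inner]
    refine Finset.sum_congr rfl fun j hj => ?_
    rw [inner_sum, Finset.sum_eq_single j]
    · exact real_inner_self_eq_norm_sq _
    · intro j' _ hne
      exact horthj K j j' (Ne.symm hne) g
    · intro h; exact absurd hj h
  have hsuma : ∑ K, a K ^ 2 ≤ ‖f‖ ^ 2 := horth (k + r) f
  have hsumb : ∑ K, b K ^ 2 ≤ (k + 1 : ℝ) * ‖g‖ ^ 2 := by
    calc ∑ K, b K ^ 2 = ∑ K, ∑ j ∈ Finset.range (k + 1), ‖D K j g‖ ^ 2 :=
          Finset.sum_congr rfl fun K _ => hb2 K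
      _ = ∑ j ∈ Finset.range (k + 1), ∑ K, ‖D K j g‖ ^ 2 := Finset.sum_comm
      _ ≤ ∑ _j ∈ Finset.range (k + 1), ‖g‖ ^ 2 :=
          Finset.sum_le_sum fun j _ => horth j g
      _ = (k + 1 : ℝ) * ‖g‖ ^ 2 := by
          simp [Finset.sum_const, mul_comm]
  calc |⟪(∑ K, A K) f, g⟫| = |∑ K, ⟪A K f, g⟫| := by
        simp [ContinuousLinearMap.sum_apply, sum_inner]
    _ ≤ ∑ K, |⟪A K f, g⟫| := Finset.abs_sum_le_sum_abs _ _
    _ ≤ ∑ K, C * (a K * b K) := by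
        refine Finset.sum_le_sum fun K _ => ?_
        rw [key K, ← mul_assoc]
        exact hA K _ _
    _ = C * ∑ K, a K * b K := by rw [Finset.mul_sum]
    _ ≤ C * (Real.sqrt (∑ K, a K ^ 2) * Real.sqrt (∑ K, b K ^ 2)) := by
        refine mul_le_mul_of_nonneg_left ?_ hC
        exact Real.sum_mul_le_sqrt_mul_sqrt _ _ _
    _ ≤ C * (Real.sqrt (‖f‖ ^ 2) * Real.sqrt ((k + 1 : ℝ) * ‖g‖ ^ 2)) := by
        refine mul_le_mul_of_nonneg_left (mul_le_mul (Real.sqrt_le_sqrt hsuma)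
          (Real.sqrt_le_sqrt hsumb) (Real.sqrt_nonneg _) (Real.sqrt_nonneg _)) hC
    _ = C * Real.sqrt (k + 1) * ‖f‖ * ‖g‖ := by
        rw [Real.sqrt_sq (norm_nonneg f), Real.sqrt_mul (by positivity),
          Real.sqrt_sq (norm_nonneg g)]
        ring
end

section
/- Suppose an operator R on L²(μ) admits a decomposition R = Σ_{K ∈ D} B_K where B_K = (P_K^{(k+r+1)} − P_K^{(k)}) B_K D_K^{(k+r)} and |⟨B_K f, g⟩| ≤ C‖f‖₂‖g‖₂ uniformly in K with the localization B_K = 1_K B_K 1_K. Then ‖R‖_{L²(μ)→L²(μ)} ≤ C √(r+1), i.e., |⟨Rf, g⟩| ≤ C√(r+1)‖f‖₂‖g‖₂ for all f, g ∈ L²(μ). -/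
open Finset RealInnerProductSpace

private lemma norm_sum_sq_of_orth {E : Type*} [NormedAddCommGroup E]
    [InnerProductSpace ℝ E] {ι : Type*} (s : Finset ι) (v : ι → E)
    (h : ∀ i ∈ s, ∀ j ∈ s, i ≠ j → ⟪v i, v j⟫ = 0) :
    ‖∑ i ∈ s, v i‖ ^ 2 = ∑ i ∈ s, ‖v i‖ ^ 2 := by
  rw [← real_inner_self_eq_norm_sq, sum_inner]
  refine Finset.sum_congr rfl fun i hi => ?_
  rw [inner_sum, Finset.sum_eq_single i]
  · exact real_inner_self_eq_norm_sq _
  · exact fun j hj hji => h i hi j hj (Ne.symm hji)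
  · exact fun hi' => absurd hi hi'

/-- Abstract form of the estimate for the operators `R = Σ_K B_K`: if each `B_K`
factors as `B_K = (P_K^{(k+r+1)} − P_K^{(k)}) B_K D_K^{(k+r)}`, where
`P_K^{(k+r+1)} − P_K^{(k)} = Σ_{j=k}^{k+r} D_K^{(j)}` is a sum of self-adjoint, mutually
orthogonal martingale blocks with `Σ_K ‖D_K^{(j)} g‖² ≤ ‖g‖²`, and
`|⟨B_K f, g⟩| ≤ C‖f‖‖g‖` uniformly, then `|⟨R f, g⟩| ≤ C √(r+1) ‖f‖ ‖g‖`. -/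
theorem sum_shifted_block_operator_bound {E : Type*} [NormedAddCommGroup E]
    [InnerProductSpace ℝ E] {κ : Type*} [Fintype κ] (k r : ℕ) (C : ℝ) (hC : 0 ≤ C)
    (B : κ → E →L[ℝ] E) (D : κ → ℕ → E →L[ℝ] E)
    (hself : ∀ K j (f g : E), ⟪D K j f, g⟫ = ⟪f, D K j g⟫)
    (horthj : ∀ K j j', j ≠ j' → ∀ g : E, ⟪D K j g, D K j' g⟫ = 0)
    (horth : ∀ j (g : E), ∑ K, ‖D K j g‖ ^ 2 ≤ ‖g‖ ^ 2)
    (hfact : ∀ K, B K = (∑ j ∈ Finset.Icc k (k + r), D K j).comp ((B K).comp (D K (k + r))))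
    (hB : ∀ K (f g : E), |⟪B K f, g⟫| ≤ C * ‖f‖ * ‖g‖) :
    ∀ f g : E, |⟪(∑ K, B K) f, g⟫| ≤ C * Real.sqrt (r + 1) * ‖f‖ * ‖g‖ := by
  intro f g
  set s : Finset ℕ := Finset.Icc k (k + r) with hs_def
  have hs : (s.card : ℝ) = (r : ℝ) + 1 := by
    have : s.card = r + 1 := by rw [hs_def, Nat.card_Icc]; omega
    rw [this]; push_cast; ring
  -- rewrite each pairing
  have key : ∀ K, ⟪B K f, g⟫ = ⟪B K (D K (k + r) f), ∑ j ∈ s, D K j g⟫ := by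
    intro K
    conv_lhs => rw [hfact K]
    simp only [ContinuousLinearMap.comp_apply, ContinuousLinearMap.sum_apply]
    rw [sum_inner, inner_sum]
    exact Finset.sum_congr rfl fun j _ => hself K j _ g
  have hnormsum : ∀ K, ‖∑ j ∈ s, D K j g‖ ^ 2 = ∑ j ∈ s, ‖D K j g‖ ^ 2 := fun K =>
    norm_sum_sq_of_orth s _ (fun i _ j _ hij => horthj K i j hij g)
  have hsum2 : ∑ K, ‖∑ j ∈ s, D K j g‖ ^ 2 ≤ ((r : ℝ) + 1) * ‖g‖ ^ 2 := by
    calc ∑ K, ‖∑ j ∈ s, D K j g‖ ^ 2 = ∑ K, ∑ j ∈ s, ‖D K j g‖ ^ 2 := by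
          exact Finset.sum_congr rfl fun K _ => hnormsum K
      _ = ∑ j ∈ s, ∑ K, ‖D K j g‖ ^ 2 := Finset.sum_comm
      _ ≤ ∑ _j ∈ s, ‖g‖ ^ 2 := Finset.sum_le_sum fun j _ => horth j g
      _ = ((r : ℝ) + 1) * ‖g‖ ^ 2 := by rw [Finset.sum_const, nsmul_eq_mul, hs]
  have hsum1 : ∑ K, ‖D K (k + r) f‖ ^ 2 ≤ ‖f‖ ^ 2 := horth _ f
  have habs : |⟪(∑ K, B K) f, g⟫| ≤
      ∑ K, C * (‖D K (k + r) f‖ * ‖∑ j ∈ s, D K j g‖) := by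
    rw [ContinuousLinearMap.sum_apply, sum_inner]
    refine (Finset.abs_sum_le_sum_abs _ _).trans (Finset.sum_le_sum fun K _ => ?_)
    rw [key K]
    have := hB K (D K (k + r) f) (∑ j ∈ s, D K j g)
    linarith [this]
  refine habs.trans ?_
  rw [← Finset.mul_sum]
  have hCS : ∑ K, ‖D K (k + r) f‖ * ‖∑ j ∈ s, D K j g‖ ≤
      Real.sqrt (r + 1) * ‖f‖ * ‖g‖ := by
    have h1 := Finset.sum_mul_sq_le_sq_mul_sq Finset.univ
      (fun K => ‖D K (k + r) f‖) (fun K => ‖∑ j ∈ s, D K j g‖)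
    have hA : (0:ℝ) ≤ ∑ K, ‖D K (k + r) f‖ * ‖∑ j ∈ s, D K j g‖ :=
      Finset.sum_nonneg fun K _ => by positivity
    calc ∑ K, ‖D K (k + r) f‖ * ‖∑ j ∈ s, D K j g‖
        ≤ Real.sqrt (∑ K, ‖D K (k + r) f‖ ^ 2) *
          Real.sqrt (∑ K, ‖∑ j ∈ s, D K j g‖ ^ 2) := by
          rw [← Real.sqrt_mul (by positivity)]
          rw [← Real.sqrt_sq hA]
          exact Real.sqrt_le_sqrt h1
      _ ≤ Real.sqrt (‖f‖ ^ 2) * Real.sqrt (((r : ℝ) + 1) * ‖g‖ ^ 2) := by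
          exact mul_le_mul (Real.sqrt_le_sqrt hsum1) (Real.sqrt_le_sqrt hsum2)
            (Real.sqrt_nonneg _) (Real.sqrt_nonneg _)
      _ = Real.sqrt (r + 1) * ‖f‖ * ‖g‖ := by
          rw [Real.sqrt_sq (norm_nonneg f), Real.sqrt_mul (by positivity),
            Real.sqrt_sq (norm_nonneg g)]
          ring
  calc C * ∑ K, ‖D K (k + r) f‖ * ‖∑ j ∈ s, D K j g‖
      ≤ C * (Real.sqrt (r + 1) * ‖f‖ * ‖g‖) := by
        exact mul_le_mul_of_nonneg_left hCS hC
    _ = C * Real.sqrt (r + 1) * ‖f‖ * ‖g‖ := by ring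
end
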